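/- arXiv:2301.00398 — 2 statements merged into one kernel-verified Lean document; each statement's English description precedes it below -/
import Mathlib

section
/- Let d ≥ 1, 1 < α < 2, a ∈ ℝ^d and β ∈ ℝ. Then lim_{N→∞} N^α · Σ_{z∈ℤ^d, z≠0} p(z) (e^{iβ(z·a)/N} − 1 − iβ(z·a)/N) = ∫_{ℝ^d} p̄(u) (e^{iβ(u·a)} − 1 − iβ(u·a)) du, where the limit is in ℂ and the sum on the left converges absolutely for each N ≥ 1. -/
open scoped Classical

/-- Euclidean norm of a point of `ℤ^d`. -/
noncomputable def znorm (d : ℕ) (z : Fin d → ℤ) : ℝ :=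
  Real.sqrt (∑ i, ((z i : ℝ)) ^ 2)

/-- The jump kernel `p(z) = ‖z‖^{-(d+α)} (2·1_{z₁>0} + 1_{z₁=0})`, `p(0) = 0`. -/
noncomputable def pker (d : ℕ) [NeZero d] (α : ℝ) (z : Fin d → ℤ) : ℝ :=
  if z = 0 then 0
  else znorm d z ^ (-((d : ℝ) + α)) *
    ((if 0 < z 0 then (2 : ℝ) else 0) + (if z 0 = 0 then 1 else 0))

/-- The continuous extension `p̄(u) = ‖u‖^{-(d+α)} (2·1_{u₁>0} + 1_{u₁=0})`, `p̄(0) = 0`. -/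
noncomputable def pbar (d : ℕ) [NeZero d] (α : ℝ) (u : EuclideanSpace ℝ (Fin d)) : ℝ :=
  if u = 0 then 0
  else ‖u‖ ^ (-((d : ℝ) + α)) *
    ((if 0 < u 0 then (2 : ℝ) else 0) + (if u 0 = 0 then 1 else 0))

/-!
Put `F(u) = p̄(u) (e^{iβ⟨u,a⟩} - 1 - iβ⟨u,a⟩)`. Since `p̄(z/N) = N^{d+α} p(z)`, the quantity
`N^α Σ_z p(z)(…)` is the Riemann sum `N^{-d} Σ_z F(z/N)`, i.e. the integral over `ℝ^d` of the step
function `u ↦ F(⌊Nu⌋/N)`. These step functions converge to `F` off the null hyperplane `{u₁ = 0}`,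
where `F` is continuous. From `|e^{it} - 1 - it| ≤ 2 min(t², |t|)` we get
`|F(u)| ≤ C min(|u|^{2-d-α}, |u|^{1-d-α})`, a radially decreasing majorant, integrable exactly
because `1 < α < 2`; as `|u| ≤ (1 + √d) |⌊Nu⌋/N|` off the cell of the origin, its rescaling by
`1 + √d` dominates all step functions. Dominated convergence gives the limit, and integrability
of the step functions gives absolute convergence of the sums.
-/

open MeasureTheory Set Filter Topology

noncomputable def expRemainder (t : ℝ) : ℂ := Complex.exp (Complex.I * t) - 1 - Complex.I * t

lemma norm_expRemainder_le_two_mul_abs (t : ℝ) : ‖expRemainder t‖ ≤ 2 * |t| := by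
  calc ‖expRemainder t‖ ≤ ‖Complex.exp (Complex.I * t) - 1‖ + ‖Complex.I * t‖ :=
        norm_sub_le _ _
    _ ≤ |t| + |t| := by
        gcongr
        · exact Real.norm_exp_I_mul_ofReal_sub_one_le
        · simp
    _ = 2 * |t| := by ring

lemma norm_expRemainder_le_two_mul_sq (t : ℝ) : ‖expRemainder t‖ ≤ 2 * t ^ 2 := by
  rcases le_or_gt |t| 1 with ht | ht
  · have hnorm : ‖Complex.I * t‖ = |t| := by simp
    calc ‖expRemainder t‖ ≤ ‖Complex.I * (t : ℂ)‖ ^ 2 :=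
          Complex.norm_exp_sub_one_sub_id_le (hnorm ▸ ht)
      _ = t ^ 2 := by rw [hnorm, sq_abs]
      _ ≤ 2 * t ^ 2 := by nlinarith [sq_nonneg t]
  · calc ‖expRemainder t‖ ≤ 2 * |t| := norm_expRemainder_le_two_mul_abs t
      _ ≤ 2 * t ^ 2 := by nlinarith [sq_abs t]

lemma integrableOn_Ioi_zero_min_rpow {r₁ r₂ : ℝ} (h₁ : -1 < r₁) (h₂ : r₂ < -1) :
    IntegrableOn (fun y : ℝ => min (y ^ r₁) (y ^ r₂)) (Ioi 0) := by
  have hmeas : Measurable (fun y : ℝ => min (y ^ r₁) (y ^ r₂)) := by fun_prop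
  rw [← Ioc_union_Ioi_eq_Ioi zero_le_one]
  refine IntegrableOn.union ?_ ?_
  · have hint : IntegrableOn (fun y : ℝ => y ^ r₁) (Ioc 0 1) := by
      rw [← intervalIntegrable_iff_integrableOn_Ioc_of_le zero_le_one]
      exact intervalIntegral.intervalIntegrable_rpow' h₁
    refine hint.mono' hmeas.aestronglyMeasurable.restrict ?_
    filter_upwards [ae_restrict_mem measurableSet_Ioc] with y hy
    rw [Real.norm_of_nonneg (le_min (by positivity [hy.1]) (by positivity [hy.1]))]
    exact min_le_left _ _
  · refine (integrableOn_Ioi_rpow_of_lt h₂ zero_lt_one).mono'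
      hmeas.aestronglyMeasurable.restrict ?_
    filter_upwards [ae_restrict_mem measurableSet_Ioi] with y (hy : 1 < y)
    rw [Real.norm_of_nonneg (le_min (by positivity) (by positivity))]
    exact min_le_right _ _

lemma integrable_min_rpow_norm {E : Type*} [NormedAddCommGroup E] [NormedSpace ℝ E]
    [FiniteDimensional ℝ E] [Nontrivial E] [MeasurableSpace E] [BorelSpace E]
    (μ : Measure E) [μ.IsAddHaarMeasure] {c₁ c₂ : ℝ}
    (h₁ : -(Module.finrank ℝ E : ℝ) < c₁) (h₂ : c₂ < -(Module.finrank ℝ E : ℝ)) :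
    Integrable (fun x : E => min (‖x‖ ^ c₁) (‖x‖ ^ c₂)) μ := by
  rw [integrable_fun_norm_addHaar μ (f := fun y => min (y ^ c₁) (y ^ c₂))]
  set n := Module.finrank ℝ E
  have hn : ((n - 1 : ℕ) : ℝ) = n - 1 := by
    rw [Nat.cast_sub Module.finrank_pos, Nat.cast_one]
  refine (integrableOn_Ioi_zero_min_rpow (r₁ := c₁ + (n - 1 : ℕ)) (r₂ := c₂ + (n - 1 : ℕ))
    (by rw [hn]; linarith) (by rw [hn]; linarith)).congr_fun (fun y (hy : 0 < y) => ?_)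
    measurableSet_Ioi
  simp only [smul_eq_mul]
  rw [Real.rpow_add hy, Real.rpow_add hy, Real.rpow_natCast,
    ← min_mul_of_nonneg _ _ (by positivity), mul_comm]

section Lattice

variable {ι : Type*}

noncomputable def scaledFloor (c : ℝ) (u : ι → ℝ) : ι → ℤ := fun i => ⌊c * u i⌋

noncomputable def latticePoint (c : ℝ) (z : ι → ℤ) : EuclideanSpace ℝ ι :=
  c⁻¹ • WithLp.toLp 2 (fun i => (z i : ℝ))

lemma measurable_scaledFloor (c : ℝ) : Measurable (scaledFloor (ι := ι) c) :=
  measurable_pi_lambda _ fun i => (measurable_const.mul (measurable_pi_apply i)).floor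

lemma scaledFloor_preimage_singleton {c : ℝ} (hc : 0 < c) (z : ι → ℤ) :
    scaledFloor c ⁻¹' {z} = univ.pi fun i => Ico (z i / c) ((z i + 1) / c) := by
  ext u
  simp only [mem_preimage, mem_singleton_iff, funext_iff, scaledFloor, Int.floor_eq_iff,
    mem_univ_pi, mem_Ico, div_le_iff₀ hc, lt_div_iff₀ hc, mul_comm (u _)]

lemma volume_scaledFloor_preimage_singleton [Fintype ι] {c : ℝ} (hc : 0 < c) (z : ι → ℤ) :
    volume (scaledFloor c ⁻¹' {z}) = ENNReal.ofReal ((c ^ Fintype.card ι)⁻¹) := by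
  rw [scaledFloor_preimage_singleton hc, volume_pi_pi]
  simp only [Real.volume_Ico, add_sub_cancel_left, ← sub_div]
  rw [Finset.prod_const, Finset.card_univ, ← ENNReal.ofReal_pow (by positivity), one_div,
    inv_pow]

lemma hasSum_integral_comp_scaledFloor [Fintype ι] {E : Type*} [NormedAddCommGroup E]
    [NormedSpace ℝ E] [CompleteSpace E]
    {f : (ι → ℤ) → E} {c : ℝ} (hc : 0 < c)
    (hf : Integrable fun u => f (scaledFloor c u)) :
    HasSum (fun z => (c ^ Fintype.card ι)⁻¹ • f z) (∫ u, f (scaledFloor c u)) := by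
  have hcells := hasSum_integral_iUnion (μ := volume) (f := fun u => f (scaledFloor c u))
    (fun z => measurable_scaledFloor c (measurableSet_singleton z))
    (fun z z' h => disjoint_singleton.2 h |>.preimage _) (by
      rw [← preimage_iUnion, iUnion_of_singleton, preimage_univ]; exact hf.integrableOn)
  rw [← preimage_iUnion, iUnion_of_singleton, preimage_univ, setIntegral_univ] at hcells
  refine hcells.congr_fun fun z => ?_
  rw [setIntegral_congr_fun (measurable_scaledFloor c (measurableSet_singleton z))
    (fun u (hu : scaledFloor c u = z) => by rw [hu]), setIntegral_const, measureReal_def,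
    volume_scaledFloor_preimage_singleton hc, ENNReal.toReal_ofReal (by positivity)]

lemma scaledFloor_zero (c : ℝ) : scaledFloor c (0 : ι → ℝ) = 0 := by
  ext i
  simp [scaledFloor]

lemma inner_latticePoint [Fintype ι] (c : ℝ) (z : ι → ℤ) (a : EuclideanSpace ℝ ι) :
    inner ℝ (latticePoint c z) a = c⁻¹ * ∑ i, (z i : ℝ) * a i := by
  rw [latticePoint, real_inner_smul_left]
  simp [PiLp.inner_apply, mul_comm]

lemma latticePoint_zero (c : ℝ) : latticePoint c (0 : ι → ℤ) = 0 := by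
  rw [latticePoint]
  simp only [Pi.zero_apply, Int.cast_zero]
  exact smul_eq_zero_of_right _ (WithLp.toLp_zero 2)

lemma one_le_norm_toLp_intCast [Fintype ι] {z : ι → ℤ} (hz : z ≠ 0) :
    1 ≤ ‖WithLp.toLp 2 (fun i => (z i : ℝ))‖ := by
  obtain ⟨i, hi⟩ := Function.ne_iff.1 hz
  calc (1 : ℝ) ≤ |(z i : ℝ)| := by exact_mod_cast Int.one_le_abs hi
    _ ≤ _ := PiLp.norm_apply_le (WithLp.toLp 2 (fun i => (z i : ℝ))) i

lemma norm_sub_latticePoint_scaledFloor_le [Fintype ι] {c : ℝ} (hc : 0 < c) (u : ι → ℝ) :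
    ‖WithLp.toLp 2 u - latticePoint c (scaledFloor c u)‖ ≤ √(Fintype.card ι) / c := by
  have hcoord : ∀ i, ‖u i - ⌊c * u i⌋ / c‖ ≤ 1 / c := fun i => by
    rw [show u i - ⌊c * u i⌋ / c = Int.fract (c * u i) / c by
      rw [Int.fract, sub_div, mul_div_cancel_left₀ _ hc.ne'], Real.norm_of_nonneg
      (div_nonneg (Int.fract_nonneg _) hc.le)]
    exact div_le_div_of_nonneg_right (Int.fract_lt_one _).le hc.le
  rw [EuclideanSpace.norm_eq]
  calc √(∑ i, ‖(WithLp.toLp 2 u - latticePoint c (scaledFloor c u)) i‖ ^ 2)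
      ≤ √(∑ _i : ι, (1 / c) ^ 2) := by
        gcongr with i
        simpa [latticePoint, scaledFloor, div_eq_inv_mul] using hcoord i
    _ = √(Fintype.card ι) / c := by
        rw [Finset.sum_const, Finset.card_univ, nsmul_eq_mul, Real.sqrt_mul (by positivity),
          Real.sqrt_sq (by positivity), mul_one_div]

lemma norm_le_mul_norm_latticePoint_scaledFloor [Fintype ι] {c : ℝ} (hc : 0 < c) {u : ι → ℝ}
    (hu : scaledFloor c u ≠ 0) :
    ‖WithLp.toLp 2 u‖ ≤ (1 + √(Fintype.card ι)) * ‖latticePoint c (scaledFloor c u)‖ := by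
  have hv : 1 / c ≤ ‖latticePoint c (scaledFloor c u)‖ := by
    rw [latticePoint, norm_smul, Real.norm_of_nonneg (by positivity), ← div_eq_inv_mul]
    exact div_le_div_of_nonneg_right (one_le_norm_toLp_intCast hu) hc.le
  set v := latticePoint c (scaledFloor c u)
  calc ‖WithLp.toLp 2 u‖ ≤ ‖v‖ + ‖WithLp.toLp 2 u - v‖ := norm_le_insert' _ _
    _ ≤ ‖v‖ + √(Fintype.card ι) * (1 / c) := by
        rw [← div_eq_mul_one_div]; gcongr; exact norm_sub_latticePoint_scaledFloor_le hc u
    _ ≤ (1 + √(Fintype.card ι)) * ‖v‖ := by nlinarith [Real.sqrt_nonneg (Fintype.card ι)]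

lemma tendsto_latticePoint_scaledFloor [Fintype ι] (u : ι → ℝ) :
    Tendsto (fun N : ℕ => latticePoint N (scaledFloor N u)) atTop (𝓝 (WithLp.toLp 2 u)) := by
  rw [tendsto_iff_norm_sub_tendsto_zero]
  refine squeeze_zero' (.of_forall fun N => norm_nonneg _) ?_
    (tendsto_const_div_atTop_nhds_zero_nat √(Fintype.card ι))
  filter_upwards [eventually_gt_atTop 0] with N hN
  rw [norm_sub_rev]
  exact norm_sub_latticePoint_scaledFloor_le (Nat.cast_pos.2 hN) u

end Lattice

section Kernel

variable {d : ℕ} [NeZero d] {α : ℝ}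

lemma pbar_nonneg (u : EuclideanSpace ℝ (Fin d)) : 0 ≤ pbar d α u := by
  unfold pbar
  split_ifs <;> positivity

lemma pbar_le (u : EuclideanSpace ℝ (Fin d)) : pbar d α u ≤ 2 * ‖u‖ ^ (-((d : ℝ) + α)) := by
  have hr : 0 ≤ ‖u‖ ^ (-((d : ℝ) + α)) := by positivity
  unfold pbar
  split_ifs <;> linarith

lemma pbar_smul {c : ℝ} (hc : 0 < c) (u : EuclideanSpace ℝ (Fin d)) :
    pbar d α (c • u) = c ^ (-((d : ℝ) + α)) * pbar d α u := by
  by_cases hu : u = 0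
  · simp [pbar, hu]
  · simp only [pbar, hu, smul_ne_zero hc.ne' hu, if_false, PiLp.smul_apply, smul_eq_mul,
      norm_smul, Real.norm_of_nonneg hc.le, Real.mul_rpow hc.le (norm_nonneg _),
      mul_pos_iff_of_pos_left hc, mul_eq_zero, hc.ne', false_or]
    ring

lemma pker_eq_pbar (z : Fin d → ℤ) :
    pker d α z = pbar d α (WithLp.toLp 2 fun i => (z i : ℝ)) := by
  have hnorm : znorm d z = ‖WithLp.toLp 2 fun i => (z i : ℝ)‖ := by
    simp [znorm, EuclideanSpace.norm_eq]
  have hzero : (WithLp.toLp 2 fun i => (z i : ℝ)) = 0 ↔ z = 0 := by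
    simp [funext_iff, ← WithLp.toLp_zero]
  simp only [pker, pbar, hzero, hnorm, Int.cast_pos, Int.cast_eq_zero]

lemma pbar_latticePoint {c : ℝ} (hc : 0 < c) (z : Fin d → ℤ) :
    pbar d α (latticePoint c z) = c ^ ((d : ℝ) + α) * pker d α z := by
  rw [latticePoint, pbar_smul (inv_pos.2 hc), Real.inv_rpow hc.le, ← Real.rpow_neg hc.le,
    neg_neg, pker_eq_pbar]

lemma continuousAt_pbar {u : EuclideanSpace ℝ (Fin d)} (hu : u 0 ≠ 0) :
    ContinuousAt (pbar d α) u := by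
  have hcoord : Continuous fun v : EuclideanSpace ℝ (Fin d) => v 0 := by fun_prop
  rcases hu.lt_or_gt with hneg | hpos
  · refine (continuousAt_const (y := (0 : ℝ))).congr ?_
    filter_upwards [(isOpen_lt hcoord continuous_const).mem_nhds hneg] with v (hv : v 0 < 0)
    have hv₀ : v ≠ 0 := fun h => by simp [h] at hv
    simp [pbar, hv₀, hv.not_gt, hv.ne]
  · have hu₀ : u ≠ 0 := fun h => by simp [h] at hpos
    have hcont :
        ContinuousAt (fun v : EuclideanSpace ℝ (Fin d) => ‖v‖ ^ (-((d : ℝ) + α)) * 2) u :=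
      (continuous_norm.continuousAt.rpow_const (Or.inl (norm_ne_zero_iff.2 hu₀))).mul
        continuousAt_const
    refine hcont.congr ?_
    filter_upwards [(isOpen_lt continuous_const hcoord).mem_nhds hpos] with v (hv : 0 < v 0)
    have hv₀ : v ≠ 0 := fun h => by simp [h] at hv
    simp [pbar, hv₀, hv, hv.ne']

end Kernel

section LevyIntegrand

variable (d : ℕ) (α β : ℝ) (a : EuclideanSpace ℝ (Fin d))

noncomputable def levyMajorant (u : EuclideanSpace ℝ (Fin d)) : ℝ :=
  4 * (|β| * ‖a‖ + (|β| * ‖a‖) ^ 2) *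
    min (‖u‖ ^ (2 - ((d : ℝ) + α))) (‖u‖ ^ (1 - ((d : ℝ) + α)))

noncomputable def levyIntegrand [NeZero d] (u : EuclideanSpace ℝ (Fin d)) : ℂ :=
  (pbar d α u : ℂ) *
    (Complex.exp (Complex.I * (β : ℂ) * ((inner ℝ u a : ℝ) : ℂ)) - 1
      - Complex.I * (β : ℂ) * ((inner ℝ u a : ℝ) : ℂ))

noncomputable def latticeSummand [NeZero d] (N : ℕ) (z : Fin d → ℤ) : ℂ :=
  (pker d α z : ℂ) *
    (Complex.exp (Complex.I * (β : ℂ) * ((∑ i, (z i : ℝ) * a i : ℝ) : ℂ) / (N : ℂ)) - 1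
      - Complex.I * (β : ℂ) * ((∑ i, (z i : ℝ) * a i : ℝ) : ℂ) / (N : ℂ))

variable {d α β a}

lemma levyMajorant_nonneg (u : EuclideanSpace ℝ (Fin d)) : 0 ≤ levyMajorant d α β a u := by
  unfold levyMajorant
  positivity

lemma levyMajorant_le_of_norm_le (hs : 2 ≤ (d : ℝ) + α) {u v : EuclideanSpace ℝ (Fin d)}
    (hu : u ≠ 0) (huv : ‖u‖ ≤ ‖v‖) : levyMajorant d α β a v ≤ levyMajorant d α β a u := by
  have hu : 0 < ‖u‖ := norm_pos_iff.2 hu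
  unfold levyMajorant
  gcongr ?_ * ?_
  exact min_le_min (Real.rpow_le_rpow_of_nonpos hu huv (by linarith))
    (Real.rpow_le_rpow_of_nonpos hu huv (by linarith))

variable [NeZero d]

lemma levyIntegrand_eq_mul_expRemainder (u : EuclideanSpace ℝ (Fin d)) :
    levyIntegrand d α β a u = pbar d α u * expRemainder (β * inner ℝ u a) := by
  simp only [levyIntegrand, expRemainder, Complex.ofReal_mul, mul_assoc]

lemma norm_levyIntegrand_le (u : EuclideanSpace ℝ (Fin d)) :
    ‖levyIntegrand d α β a u‖ ≤ levyMajorant d α β a u := by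
  rcases eq_or_ne u 0 with rfl | hu
  · simpa [levyIntegrand, pbar] using levyMajorant_nonneg 0
  set r := ‖u‖
  set K := |β| * ‖a‖
  set t := β * inner ℝ u a
  have hr : 0 < r := norm_pos_iff.2 hu
  have ht : |t| ≤ K * r := by
    rw [abs_mul, mul_assoc]
    exact mul_le_mul_of_nonneg_left ((abs_real_inner_le_norm u a).trans_eq (mul_comm _ _))
      (abs_nonneg β)
  have hK : 0 ≤ K := by positivity
  have hexp : ‖expRemainder t‖ ≤ 2 * (K + K ^ 2) * min (r ^ 2) r := by
    rw [mul_min_of_nonneg _ _ (by positivity)]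
    refine le_min ?_ ?_
    · calc ‖expRemainder t‖ ≤ 2 * t ^ 2 := norm_expRemainder_le_two_mul_sq t
        _ ≤ 2 * (K * r) ^ 2 := by rw [← sq_abs t]; gcongr
        _ ≤ 2 * (K + K ^ 2) * r ^ 2 := by nlinarith [sq_nonneg r, sq_nonneg K]
    · calc ‖expRemainder t‖ ≤ 2 * |t| := norm_expRemainder_le_two_mul_abs t
        _ ≤ 2 * (K * r) := by gcongr
        _ ≤ 2 * (K + K ^ 2) * r := by nlinarith [sq_nonneg K]
  have hpow : r ^ (-((d : ℝ) + α)) * min (r ^ 2) r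
      = min (r ^ (2 - ((d : ℝ) + α))) (r ^ (1 - ((d : ℝ) + α))) := by
    rw [mul_min_of_nonneg _ _ (by positivity), sub_eq_neg_add, sub_eq_neg_add,
      Real.rpow_add hr, Real.rpow_add hr, Real.rpow_two, Real.rpow_one]
  calc ‖levyIntegrand d α β a u‖ = pbar d α u * ‖expRemainder t‖ := by
        rw [levyIntegrand_eq_mul_expRemainder, norm_mul, Complex.norm_real,
          Real.norm_of_nonneg (pbar_nonneg u)]
    _ ≤ 2 * r ^ (-((d : ℝ) + α)) * (2 * (K + K ^ 2) * min (r ^ 2) r) :=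
        mul_le_mul (pbar_le u) hexp (norm_nonneg _) (by positivity)
    _ = levyMajorant d α β a u := by rw [levyMajorant, ← hpow]; ring

lemma integrable_levyMajorant (hα₁ : 1 < α) (hα₂ : α < 2) :
    Integrable (levyMajorant d α β a) := by
  have hmin := integrable_min_rpow_norm (volume : Measure (EuclideanSpace ℝ (Fin d)))
    (c₁ := 2 - ((d : ℝ) + α)) (c₂ := 1 - ((d : ℝ) + α))
    (by rw [finrank_euclideanSpace_fin]; linarith) (by rw [finrank_euclideanSpace_fin]; linarith)
  exact hmin.const_mul _

lemma levyIntegrand_zero : levyIntegrand d α β a 0 = 0 := by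
  simp [levyIntegrand, pbar]

lemma continuousAt_levyIntegrand {u : EuclideanSpace ℝ (Fin d)} (hu : u 0 ≠ 0) :
    ContinuousAt (levyIntegrand d α β a) u := by
  unfold levyIntegrand
  have := continuousAt_pbar (α := α) hu
  fun_prop

end LevyIntegrand

section RiemannSums

variable {d : ℕ} [NeZero d] {α β : ℝ} {a : EuclideanSpace ℝ (Fin d)}

lemma norm_levyIntegrand_latticePoint_scaledFloor_le (hα : 1 ≤ α) {c : ℝ} (hc : 0 < c)
    (u : Fin d → ℝ) :
    ‖levyIntegrand d α β a (latticePoint c (scaledFloor c u))‖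
      ≤ levyMajorant d α β a ((1 + √(d : ℝ))⁻¹ • WithLp.toLp 2 u) := by
  have hs : 2 ≤ (d : ℝ) + α := by
    linarith [(Nat.one_le_cast (α := ℝ)).2 (NeZero.one_le (n := d))]
  by_cases hz : scaledFloor c u = 0
  · rw [hz, latticePoint_zero, levyIntegrand_zero, norm_zero]
    exact levyMajorant_nonneg _
  have hu : u ≠ 0 := fun h => hz (h ▸ scaledFloor_zero c)
  refine (norm_levyIntegrand_le _).trans (levyMajorant_le_of_norm_le hs ?_ ?_)
  · exact smul_ne_zero (by positivity) (by simpa using hu)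
  · rw [norm_smul, Real.norm_of_nonneg (by positivity), inv_mul_le_iff₀ (by positivity)]
    simpa using norm_le_mul_norm_latticePoint_scaledFloor hc hz

lemma integrable_levyMajorant_smul_toLp (hα₁ : 1 < α) (hα₂ : α < 2) {R : ℝ} (hR : R ≠ 0) :
    Integrable fun u : Fin d → ℝ => levyMajorant d α β a (R • WithLp.toLp 2 u) :=
  ((PiLp.volume_preserving_toLp (Fin d)).integrable_comp_emb
    (MeasurableEquiv.toLp 2 _).measurableEmbedding).2
    ((integrable_levyMajorant hα₁ hα₂).comp_smul hR)

lemma integrable_levyIntegrand_latticePoint_scaledFloor (hα₁ : 1 < α) (hα₂ : α < 2) {c : ℝ}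
    (hc : 0 < c) :
    Integrable fun u : Fin d → ℝ => levyIntegrand d α β a (latticePoint c (scaledFloor c u)) := by
  exact (integrable_levyMajorant_smul_toLp hα₁ hα₂ (by positivity)).mono'
    ((measurable_of_countable fun z => levyIntegrand d α β a (latticePoint c z)).comp
      (measurable_scaledFloor c)).aestronglyMeasurable
    (.of_forall (norm_levyIntegrand_latticePoint_scaledFloor_le hα₁.le hc))

lemma tendsto_integral_levyIntegrand_latticePoint_scaledFloor (hα₁ : 1 < α) (hα₂ : α < 2) :
    Tendsto
      (fun N : ℕ => ∫ u : Fin d → ℝ, levyIntegrand d α β a (latticePoint N (scaledFloor N u)))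
      atTop (𝓝 (∫ v, levyIntegrand d α β a v)) := by
  rw [← (PiLp.volume_preserving_toLp (Fin d)).integral_comp
    (MeasurableEquiv.toLp 2 _).measurableEmbedding]
  refine tendsto_integral_filter_of_dominated_convergence _
    (.of_forall fun N => ((measurable_of_countable fun z => levyIntegrand d α β a
      (latticePoint N z)).comp (measurable_scaledFloor _)).aestronglyMeasurable) ?_
    (integrable_levyMajorant_smul_toLp (β := β) (a := a) hα₁ hα₂
      (R := (1 + √(d : ℝ))⁻¹) (by positivity)) ?_
  · filter_upwards [eventually_gt_atTop 0] with N hN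
    exact .of_forall (norm_levyIntegrand_latticePoint_scaledFloor_le hα₁.le (Nat.cast_pos.2 hN))
  · filter_upwards [Measure.ae_eval_ne (fun _ => volume) 0 0] with u hu
    exact (continuousAt_levyIntegrand hu).tendsto.comp (tendsto_latticePoint_scaledFloor u)

lemma latticeSummand_eq_smul {N : ℕ} (hN : 0 < N) (z : Fin d → ℤ) :
    latticeSummand d α β a N z
      = (((N : ℝ) ^ α * (N : ℝ) ^ d)⁻¹ : ℝ) • levyIntegrand d α β a (latticePoint N z) := by
  have hN' : (0 : ℝ) < N := Nat.cast_pos.2 hN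
  have hpow : (N : ℝ) ^ ((d : ℝ) + α) = (N : ℝ) ^ α * (N : ℝ) ^ d := by
    rw [Real.rpow_add hN', Real.rpow_natCast, mul_comm]
  have hα : (((N : ℝ) ^ α : ℝ) : ℂ) ≠ 0 :=
    Complex.ofReal_ne_zero.2 (Real.rpow_pos_of_pos hN' α).ne'
  have hNc : (N : ℂ) ≠ 0 := Nat.cast_ne_zero.2 hN.ne'
  rw [latticeSummand, levyIntegrand, pbar_latticePoint hN', inner_latticePoint, hpow,
    Complex.real_smul]
  push_cast
  field_simp

lemma hasSum_latticeSummand (hα₁ : 1 < α) (hα₂ : α < 2) {N : ℕ} (hN : 0 < N) :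
    HasSum (latticeSummand d α β a N) (((N : ℝ) ^ α)⁻¹ •
      ∫ u : Fin d → ℝ, levyIntegrand d α β a (latticePoint N (scaledFloor N u))) := by
  have hN' : (0 : ℝ) < N := Nat.cast_pos.2 hN
  refine ((hasSum_integral_comp_scaledFloor
    (f := fun z => levyIntegrand d α β a (latticePoint N z)) hN'
    (integrable_levyIntegrand_latticePoint_scaledFloor hα₁ hα₂ hN')).const_smul
    ((N : ℝ) ^ α)⁻¹).congr_fun fun z => ?_
  rw [latticeSummand_eq_smul hN, smul_smul, mul_inv, Fintype.card_fin]

lemma summable_norm_latticeSummand (hα₁ : 1 < α) (hα₂ : α < 2) {N : ℕ} (hN : 0 < N) :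
    Summable fun z => ‖latticeSummand d α β a N z‖ := by
  have hN' : (0 : ℝ) < N := Nat.cast_pos.2 hN
  refine ((hasSum_integral_comp_scaledFloor
    (f := fun z => ‖levyIntegrand d α β a (latticePoint N z)‖) hN'
    (integrable_levyIntegrand_latticePoint_scaledFloor hα₁ hα₂ hN').norm).summable.mul_left
    ((N : ℝ) ^ α)⁻¹).congr fun z => ?_
  rw [latticeSummand_eq_smul hN, norm_smul, Real.norm_of_nonneg (by positivity), mul_inv,
    smul_eq_mul, Fintype.card_fin, mul_assoc]

end RiemannSums

theorem statement6_general (d : ℕ) [NeZero d] (α : ℝ) (hα1 : 1 < α) (hα2 : α < 2)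
    (a : EuclideanSpace ℝ (Fin d)) (β : ℝ) :
    (∀ N : ℕ, 1 ≤ N → Summable (fun z : Fin d → ℤ =>
        ‖(pker d α z : ℂ) *
          (Complex.exp (Complex.I * (β : ℂ) * ((∑ i, (z i : ℝ) * a i : ℝ) : ℂ) / (N : ℂ)) - 1
            - Complex.I * (β : ℂ) * ((∑ i, (z i : ℝ) * a i : ℝ) : ℂ) / (N : ℂ))‖)) ∧
    Filter.Tendsto
      (fun N : ℕ => (((N : ℝ) ^ α : ℝ) : ℂ) *
        ∑' z : Fin d → ℤ, (pker d α z : ℂ) *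
          (Complex.exp (Complex.I * (β : ℂ) * ((∑ i, (z i : ℝ) * a i : ℝ) : ℂ) / (N : ℂ)) - 1
            - Complex.I * (β : ℂ) * ((∑ i, (z i : ℝ) * a i : ℝ) : ℂ) / (N : ℂ)))
      Filter.atTop
      (nhds (∫ u : EuclideanSpace ℝ (Fin d),
        (pbar d α u : ℂ) *
          (Complex.exp (Complex.I * (β : ℂ) * ((inner ℝ u a : ℝ) : ℂ)) - 1
            - Complex.I * (β : ℂ) * ((inner ℝ u a : ℝ) : ℂ)))) := by
  refine ⟨fun N hN => summable_norm_latticeSummand (β := β) (a := a) hα1 hα2 hN, ?_⟩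
  refine (tendsto_integral_levyIntegrand_latticePoint_scaledFloor (β := β) (a := a)
    hα1 hα2).congr' ?_
  filter_upwards [eventually_gt_atTop 0] with N hN
  have hα : (((N : ℝ) ^ α : ℝ) : ℂ) ≠ 0 :=
    Complex.ofReal_ne_zero.2 (Real.rpow_pos_of_pos (Nat.cast_pos.2 hN) α).ne'
  change _ = _ * ∑' z, latticeSummand d α β a N z
  rw [(hasSum_latticeSummand hα1 hα2 hN).tsum_eq, Complex.real_smul, Complex.ofReal_inv,
    mul_inv_cancel_left₀ hα]

/-- for `1 < α < 2`,
`lim_{N→∞} N^α Σ_{z≠0} p(z)(e^{iβ(z·a)/N} − 1 − iβ(z·a)/N)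
  = ∫ p̄(u)(e^{iβ(u·a)} − 1 − iβ(u·a)) du`,
the sum converging absolutely for each `N ≥ 1`. -/
theorem statement6 (d : ℕ) [NeZero d] (hd : 1 ≤ d) (α : ℝ) (hα1 : 1 < α) (hα2 : α < 2)
    (a : EuclideanSpace ℝ (Fin d)) (β : ℝ) :
    (∀ N : ℕ, 1 ≤ N → Summable (fun z : Fin d → ℤ =>
        ‖(pker d α z : ℂ) *
          (Complex.exp (Complex.I * (β : ℂ) * ((∑ i, (z i : ℝ) * a i : ℝ) : ℂ) / (N : ℂ)) - 1
            - Complex.I * (β : ℂ) * ((∑ i, (z i : ℝ) * a i : ℝ) : ℂ) / (N : ℂ))‖)) ∧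
    Filter.Tendsto
      (fun N : ℕ => (((N : ℝ) ^ α : ℝ) : ℂ) *
        ∑' z : Fin d → ℤ, (pker d α z : ℂ) *
          (Complex.exp (Complex.I * (β : ℂ) * ((∑ i, (z i : ℝ) * a i : ℝ) : ℂ) / (N : ℂ)) - 1
            - Complex.I * (β : ℂ) * ((∑ i, (z i : ℝ) * a i : ℝ) : ℂ) / (N : ℂ)))
      Filter.atTop
      (nhds (∫ u : EuclideanSpace ℝ (Fin d),
        (pbar d α u : ℂ) *
          (Complex.exp (Complex.I * (β : ℂ) * ((inner ℝ u a : ℝ) : ℂ)) - 1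
            - Complex.I * (β : ℂ) * ((inner ℝ u a : ℝ) : ℂ)))) :=
  statement6_general d α hα1 hα2 a β
end

section
/- Let d ≥ 1 and α > 0. There exists a finite constant C = C(d,α) such that for every λ > 0 and every finitely supported function f : ℤ^d \ {0} → ℝ, defining Q(f) = λ Σ_{x≠0} f(x)² + (1/4) Σ_{x,y∈ℤ^d, x≠0, y≠0} s(y−x) (f(y) − f(x))², and defining f_ext : ℤ^d → ℝ by f_ext(x) = f(x) for x ≠ 0 and f_ext(0) = Σ_{x≠0} s(x) f(x), and Q_ext(f_ext) = λ Σ_{x∈ℤ^d} f_ext(x)² + (1/4) Σ_{x,y∈ℤ^d} s(y−x) (f_ext(y) − f_ext(x))², one has Q(f) ≤ Q_ext(f_ext) ≤ C · Q(f). -/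
/-- The normalizing constant `s* = Σ_{x≠0} ‖x‖^{-(d+α)}`. -/
noncomputable def sstar (d : ℕ) (α : ℝ) : ℝ :=
  ∑' x : Fin d → ℤ, if x = 0 then 0 else znorm d x ^ (-((d : ℝ) + α))

/-- The step distribution `s(x) = ‖x‖^{-(d+α)}/s*` on `ℤ^d`, `s(0) = 0`. -/
noncomputable def sfun (d : ℕ) (α : ℝ) (x : Fin d → ℤ) : ℝ :=
  if x = 0 then 0 else znorm d x ^ (-((d : ℝ) + α)) / sstar d α

/-!
Since `f_ext` agrees with `f` off the origin, splitting off the pairs through `0` gives the exact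
identity `Q_ext(f_ext) = Q(f) + λ f_ext(0)² + ½ Σ_x s(x) (f_ext(x) - f_ext(0))²`, so the lower
bound is immediate. For the upper bound, `f_ext(0)` is an `s`-average of `f`, so Jensen gives
`f_ext(0)² ≤ Σ_{x≠0} f(x)²`; and `f_ext(x) - f_ext(0)` is the `s`-average of
`y ↦ f_ext(x) - f_ext(y)`, so Jensen bounds the last sum by
`Σ_{x,y≠0} s(x) s(y) (f(x) - f(y))²`. The kernel is quasi-multiplicative,
`s(x) s(y) ≤ K s(y - x)` with `K = 2^{d+α}/s*`, because `‖y - x‖ ≤ ‖x‖ + ‖y‖ ≤ 2 ‖x‖ ‖y‖` on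
`ℤ^d \ {0}`. Hence `C = 2 + 2K` works.
-/

open Function

lemma summable_mul_of_summable_mul_sq {ι : Type*} {w v : ι → ℝ} (hw : ∀ i, 0 ≤ w i)
    (hws : Summable w) (hv : Summable fun i => w i * v i ^ 2) :
    Summable fun i => w i * v i := by
  refine ((hws.add hv).div_const 2).of_norm_bounded fun i => ?_
  rw [Real.norm_eq_abs, abs_mul, abs_of_nonneg (hw i)]
  have h := mul_nonneg (hw i) (sq_nonneg (|v i| - 1))
  rw [sub_sq, sq_abs] at h
  linarith

lemma sq_tsum_mul_le_tsum_mul_sq {ι : Type*} {w v : ι → ℝ} (hw : ∀ i, 0 ≤ w i)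
    (hws : Summable w) (hw1 : ∑' i, w i = 1) (hv : Summable fun i => w i * v i ^ 2) :
    (∑' i, w i * v i) ^ 2 ≤ ∑' i, w i * v i ^ 2 := by
  set m := ∑' i, w i * v i
  have hvar : HasSum (fun i => w i * v i ^ 2 - 2 * m * (w i * v i) + m ^ 2 * w i)
      ((∑' i, w i * v i ^ 2) - 2 * m * m + m ^ 2 * ∑' i, w i) :=
    (hv.hasSum.sub ((summable_mul_of_summable_mul_sq hw hws hv).hasSum.mul_left _)).add
      (hws.hasSum.mul_left _)
  have := hvar.nonneg fun i => by nlinarith [mul_nonneg (hw i) (sq_nonneg (v i - m))]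
  rw [hw1] at this
  nlinarith

lemma tsum_tsum_eq_tsum_prod_of_nonneg {α β : Type*} {F : α × β → ℝ} (hF0 : 0 ≤ F)
    (hF : Summable F) : ∑' x, ∑' y, F (x, y) = ∑' p, F p :=
  (hF.tsum_prod' ((summable_prod_of_nonneg hF0).1 hF).1).symm

lemma rpow_neg_mul_rpow_neg_le {a b c p : ℝ} (ha : 1 ≤ a) (hb : 1 ≤ b) (hc : 0 < c)
    (hcab : c ≤ a + b) (hp : 0 ≤ p) : a ^ (-p) * b ^ (-p) ≤ 2 ^ p * c ^ (-p) := by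
  have hc2 : c ≤ 2 * (a * b) := by nlinarith
  calc a ^ (-p) * b ^ (-p) = 2 ^ p * (2 * (a * b)) ^ (-p) := by
        rw [Real.mul_rpow zero_le_two (by positivity),
          Real.mul_rpow (by positivity) (by positivity), ← mul_assoc, ← Real.rpow_add two_pos, add_neg_cancel, Real.rpow_zero, one_mul]
    _ ≤ 2 ^ p * c ^ (-p) :=
        mul_le_mul_of_nonneg_left (Real.rpow_le_rpow_of_nonpos hc hc2 (neg_nonpos.2 hp))
          (by positivity)

structure IsSymmStepDistribution {G : Type*} [AddGroup G] (s : G → ℝ) : Prop where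
  nonneg : ∀ x, 0 ≤ s x
  summable : Summable s
  tsum_eq_one : ∑' x, s x = 1
  map_zero : s 0 = 0
  map_neg : ∀ x, s (-x) = s x

section DirichletForm

variable {G : Type*} [AddCommGroup G] [DecidableEq G]

-- `Q_ext` of the paper
noncomputable def dirichletForm (s : G → ℝ) (lam : ℝ) (g : G → ℝ) : ℝ :=
  lam * (∑' x, g x ^ 2) + (1 / 4) * ∑' x, ∑' y, s (y - x) * (g y - g x) ^ 2

-- `Q` of the paper: the same form restricted to `G \ {0}`
noncomputable def puncturedDirichletForm (s : G → ℝ) (lam : ℝ) (f : G → ℝ) : ℝ :=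
  lam * (∑' x, (if x ≠ 0 then f x ^ 2 else 0))
    + (1 / 4) * ∑' x, ∑' y, (if x ≠ 0 ∧ y ≠ 0 then s (y - x) * (f y - f x) ^ 2 else 0)

lemma puncturedDirichletForm_congr {s : G → ℝ} {lam : ℝ} {f g : G → ℝ}
    (h : ∀ x, x ≠ 0 → g x = f x) :
    puncturedDirichletForm s lam g = puncturedDirichletForm s lam f := by
  simp +contextual [puncturedDirichletForm, h]

end DirichletForm

namespace IsSymmStepDistribution

variable {G : Type*} [AddCommGroup G] {s : G → ℝ} {g : G → ℝ}

lemma le_one (hs : IsSymmStepDistribution s) (x : G) : s x ≤ 1 :=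
  hs.tsum_eq_one ▸ hs.summable.le_tsum x fun y _ => hs.nonneg y

lemma summable_mul_sq (hs : IsSymmStepDistribution s) (hg : Summable fun x => g x ^ 2) :
    Summable fun x => s x * g x ^ 2 :=
  hg.of_nonneg_of_le (fun x => mul_nonneg (hs.nonneg x) (sq_nonneg _))
    fun x => mul_le_of_le_one_left (sq_nonneg _) (hs.le_one x)

lemma summable_mul_sq_sub (hs : IsSymmStepDistribution s) (hg : Summable fun x => g x ^ 2)
    (c : ℝ) : Summable fun x => s x * (g x - c) ^ 2 := by
  refine ((hs.summable.mul_left (2 * c ^ 2)).add ((hs.summable_mul_sq hg).mul_left 2))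
    |>.of_nonneg_of_le (fun x => mul_nonneg (hs.nonneg x) (sq_nonneg _)) fun x => ?_
  nlinarith [mul_nonneg (hs.nonneg x) (sq_nonneg (g x + c))]

lemma summable_comp_sub_mul (hs : IsSymmStepDistribution s) {h : G → ℝ} (h0 : ∀ x, 0 ≤ h x)
    (hh : Summable h) : Summable fun p : G × G => s (p.2 - p.1) * h p.1 := by
  rw [← (Equiv.prodShear (Equiv.refl G) Equiv.addRight).summable_iff]
  refine (hh.mul_of_nonneg hs.summable h0 hs.nonneg).congr fun p => ?_
  simp [mul_comm]

lemma summable_jump (hs : IsSymmStepDistribution s) (hg : Summable fun x => g x ^ 2) :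
    Summable fun p : G × G => s (p.2 - p.1) * (g p.2 - g p.1) ^ 2 := by
  have hk := hs.summable_comp_sub_mul (fun x => sq_nonneg (g x)) hg
  have hk' : Summable fun p : G × G => s (p.2 - p.1) * g p.2 ^ 2 := by
    refine ((Equiv.prodComm G G).summable_iff.mpr hk).congr fun p => ?_
    simp [← hs.map_neg (p.2 - p.1)]
  refine ((hk.add hk').mul_left 2).of_nonneg_of_le
    (fun p => mul_nonneg (hs.nonneg _) (sq_nonneg _)) fun p => ?_
  nlinarith [mul_nonneg (hs.nonneg (p.2 - p.1)) (sq_nonneg (g p.2 + g p.1))]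

lemma summable_punctured_jump [DecidableEq G] (hs : IsSymmStepDistribution s)
    (hg : Summable fun x => g x ^ 2) :
    Summable fun p : G × G =>
      if p.1 ≠ 0 ∧ p.2 ≠ 0 then s (p.2 - p.1) * (g p.2 - g p.1) ^ 2 else 0 :=
  ((hs.summable_jump hg).indicator {p | p.1 ≠ 0 ∧ p.2 ≠ 0}).congr fun p => by
    simp [Set.indicator_apply]

lemma tsum_tsum_jump_eq [DecidableEq G] (hs : IsSymmStepDistribution s)
    (hg : Summable fun x => g x ^ 2) :
    ∑' x, ∑' y, s (y - x) * (g y - g x) ^ 2 =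
      (∑' x, ∑' y, if x ≠ 0 ∧ y ≠ 0 then s (y - x) * (g y - g x) ^ 2 else 0)
        + 2 * ∑' x, s x * (g x - g 0) ^ 2 := by
  set φ : G × G → ℝ := fun p => s (p.2 - p.1) * (g p.2 - g p.1) ^ 2
  set Ψ : G × G → ℝ := fun p => if p.1 ≠ 0 ∧ p.2 ≠ 0 then φ p else 0
  have hφ0 : 0 ≤ φ := fun p => mul_nonneg (hs.nonneg _) (sq_nonneg _)
  have hΨ0 : 0 ≤ Ψ := fun p => by dsimp only [Ψ]; split_ifs; exacts [hφ0 p, le_rfl]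
  have hφ : Summable φ := hs.summable_jump hg
  have hΨ : Summable Ψ := hs.summable_punctured_jump hg
  have hV := (hs.summable_mul_sq_sub hg (g 0)).hasSum
  have hA : HasSum (fun p : G × G => if p.1 = 0 then φ p else 0)
      (∑' x, s x * (g x - g 0) ^ 2) := by
    rw [← (Prod.mk_right_injective 0).hasSum_iff]
    · simpa [φ, comp_def] using hV
    · rintro ⟨x, y⟩ hp
      have hx : x ≠ 0 := by rintro rfl; exact hp ⟨y, rfl⟩
      simp [hx]
  have hB : HasSum (fun p : G × G => if p.2 = 0 then φ p else 0)
      (∑' x, s x * (g x - g 0) ^ 2) := by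
    rw [← (Prod.mk_left_injective 0).hasSum_iff]
    · simpa [φ, comp_def, hs.map_neg, sub_sq_comm (g 0)] using hV
    · rintro ⟨x, y⟩ hp
      have hy : y ≠ 0 := by rintro rfl; exact hp ⟨x, rfl⟩
      simp [hy]
  -- `(0, 0)` is counted twice on the right, harmlessly: `φ` vanishes on the diagonal
  have hsplit : φ = fun p =>
      Ψ p + ((if p.1 = 0 then φ p else 0) + if p.2 = 0 then φ p else 0) := by
    funext ⟨x, y⟩
    by_cases hx : x = 0 <;> by_cases hy : y = 0 <;> simp [Ψ, φ, hx, hy]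
  rw [tsum_tsum_eq_tsum_prod_of_nonneg hφ0 hφ, tsum_tsum_eq_tsum_prod_of_nonneg hΨ0 hΨ,
    hsplit, (hΨ.hasSum.add (hA.add hB)).tsum_eq, two_mul]

lemma tsum_mul_sub_eq (hs : IsSymmStepDistribution s) (hg : Summable fun x => g x ^ 2)
    (hg0 : g 0 = ∑' x, s x * g x) (x : G) : ∑' y, s y * (g x - g y) = g x - g 0 := by
  have hsg := summable_mul_of_summable_mul_sq hs.nonneg hs.summable (hs.summable_mul_sq hg)
  have h := (hs.summable.hasSum.mul_right (g x)).sub hsg.hasSum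
  rw [hs.tsum_eq_one, one_mul, ← hg0] at h
  simpa only [mul_sub] using h.tsum_eq

lemma mul_mul_sq_sub_le [DecidableEq G] (hs : IsSymmStepDistribution s) {K : ℝ}
    (hK : ∀ x y, x ≠ 0 → y ≠ 0 → x ≠ y → s x * s y ≤ K * s (y - x)) (g : G → ℝ) (x y : G) :
    s x * (s y * (g x - g y) ^ 2) ≤
      K * if x ≠ 0 ∧ y ≠ 0 then s (y - x) * (g y - g x) ^ 2 else 0 := by
  by_cases hx : x = 0
  · simp [hx, hs.map_zero]
  by_cases hy : y = 0
  · simp [hy, hs.map_zero]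
  by_cases hxy : x = y
  · simp [hxy]
  rw [if_pos ⟨hx, hy⟩, ← mul_assoc, ← mul_assoc, sub_sq_comm]
  exact mul_le_mul_of_nonneg_right (hK x y hx hy hxy) (sq_nonneg _)

lemma tsum_mul_sq_sub_le [DecidableEq G] (hs : IsSymmStepDistribution s) {K : ℝ}
    (hK : ∀ x y, x ≠ 0 → y ≠ 0 → x ≠ y → s x * s y ≤ K * s (y - x))
    (hg : Summable fun x => g x ^ 2) (hg0 : g 0 = ∑' x, s x * g x) :
    ∑' x, s x * (g x - g 0) ^ 2 ≤
      K * ∑' x, ∑' y, if x ≠ 0 ∧ y ≠ 0 then s (y - x) * (g y - g x) ^ 2 else 0 := by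
  set Ψ : G × G → ℝ := fun p =>
    if p.1 ≠ 0 ∧ p.2 ≠ 0 then s (p.2 - p.1) * (g p.2 - g p.1) ^ 2 else 0
  have hΨ0 : 0 ≤ Ψ := fun p => by
    dsimp only [Ψ]; split_ifs; exacts [mul_nonneg (hs.nonneg _) (sq_nonneg _), le_rfl]
  obtain ⟨hΨin, hΨout⟩ := (summable_prod_of_nonneg hΨ0).1 (hs.summable_punctured_jump hg)
  rw [← tsum_mul_left]
  refine (hs.summable_mul_sq_sub hg (g 0)).tsum_le_tsum (fun x => ?_) (hΨout.mul_left K)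
  -- Jensen for the `s`-average `g x - g 0 = Σ_y s(y) (g x - g y)`
  have hv : Summable fun y => s y * (g x - g y) ^ 2 := by
    simpa only [sub_sq_comm (g x)] using hs.summable_mul_sq_sub hg (g x)
  have hjensen := sq_tsum_mul_le_tsum_mul_sq hs.nonneg hs.summable hs.tsum_eq_one hv
  rw [hs.tsum_mul_sub_eq hg hg0 x] at hjensen
  calc s x * (g x - g 0) ^ 2 ≤ s x * ∑' y, s y * (g x - g y) ^ 2 :=
        mul_le_mul_of_nonneg_left hjensen (hs.nonneg x)
    _ = ∑' y, s x * (s y * (g x - g y) ^ 2) := tsum_mul_left.symm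
    _ ≤ ∑' y, K * Ψ (x, y) :=
        (hv.mul_left (s x)).tsum_le_tsum (hs.mul_mul_sq_sub_le hK g x) ((hΨin x).mul_left K)
    _ = K * ∑' y, Ψ (x, y) := tsum_mul_left

lemma sq_apply_zero_le [DecidableEq G] (hs : IsSymmStepDistribution s)
    (hg : Summable fun x => g x ^ 2) (hg0 : g 0 = ∑' x, s x * g x) :
    g 0 ^ 2 ≤ ∑' x, if x ≠ 0 then g x ^ 2 else 0 := by
  have hg' : Summable fun x => if x ≠ 0 then g x ^ 2 else 0 :=
    (hg.indicator {x | x ≠ 0}).congr fun x => by simp [Set.indicator_apply]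
  calc g 0 ^ 2 ≤ ∑' x, s x * g x ^ 2 :=
        hg0 ▸ sq_tsum_mul_le_tsum_mul_sq hs.nonneg hs.summable hs.tsum_eq_one
          (hs.summable_mul_sq hg)
    _ ≤ ∑' x, if x ≠ 0 then g x ^ 2 else 0 := by
        refine (hs.summable_mul_sq hg).tsum_le_tsum (fun x => ?_) hg'
        split_ifs with hx
        · exact mul_le_of_le_one_left (sq_nonneg _) (hs.le_one x)
        · simp [not_not.1 hx, hs.map_zero]

lemma dirichletForm_eq [DecidableEq G] (hs : IsSymmStepDistribution s) (lam : ℝ)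
    (hg : Summable fun x => g x ^ 2) :
    dirichletForm s lam g = puncturedDirichletForm s lam g + lam * g 0 ^ 2
      + 1 / 2 * ∑' x, s x * (g x - g 0) ^ 2 := by
  have hsq : ∑' x, g x ^ 2 = (∑' x, if x ≠ 0 then g x ^ 2 else 0) + g 0 ^ 2 := by
    simp [hg.tsum_eq_add_tsum_ite 0, ite_not, add_comm]
  rw [dirichletForm, puncturedDirichletForm, hsq, hs.tsum_tsum_jump_eq hg]
  ring

theorem puncturedDirichletForm_le_dirichletForm [DecidableEq G] (hs : IsSymmStepDistribution s)
    {lam : ℝ} (hlam : 0 ≤ lam) {f : G → ℝ} (hg : Summable fun x => g x ^ 2)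
    (hgf : ∀ x, x ≠ 0 → g x = f x) :
    puncturedDirichletForm s lam f ≤ dirichletForm s lam g := by
  rw [← puncturedDirichletForm_congr hgf, hs.dirichletForm_eq lam hg]
  have hV : 0 ≤ ∑' x, s x * (g x - g 0) ^ 2 :=
    tsum_nonneg fun x => mul_nonneg (hs.nonneg x) (sq_nonneg _)
  linarith [mul_nonneg hlam (sq_nonneg (g 0))]

theorem dirichletForm_le_mul_puncturedDirichletForm [DecidableEq G]
    (hs : IsSymmStepDistribution s) {K : ℝ} (hK0 : 0 ≤ K)
    (hK : ∀ x y, x ≠ 0 → y ≠ 0 → x ≠ y → s x * s y ≤ K * s (y - x))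
    {lam : ℝ} (hlam : 0 ≤ lam) {f : G → ℝ} (hg : Summable fun x => g x ^ 2)
    (hgf : ∀ x, x ≠ 0 → g x = f x) (hg0 : g 0 = ∑' x, s x * f x) :
    dirichletForm s lam g ≤ (2 + 2 * K) * puncturedDirichletForm s lam f := by
  have hg0' : g 0 = ∑' x, s x * g x := hg0.trans <| tsum_congr fun x => by
    by_cases hx : x = 0
    · simp [hx, hs.map_zero]
    · rw [hgf x hx]
  rw [← puncturedDirichletForm_congr hgf, hs.dirichletForm_eq lam hg]
  have h0 := hs.sq_apply_zero_le hg hg0'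
  have hV := hs.tsum_mul_sq_sub_le hK hg hg0'
  have hT : 0 ≤ ∑' x, if x ≠ 0 then g x ^ 2 else 0 :=
    tsum_nonneg fun x => by split_ifs <;> positivity
  have hD : 0 ≤ ∑' x, ∑' y, if x ≠ 0 ∧ y ≠ 0 then s (y - x) * (g y - g x) ^ 2 else 0 :=
    tsum_nonneg fun x => tsum_nonneg fun y => by
      split_ifs <;> [exact mul_nonneg (hs.nonneg _) (sq_nonneg _); exact le_rfl]
  unfold puncturedDirichletForm
  linarith [mul_le_mul_of_nonneg_left h0 hlam, mul_nonneg hK0 (mul_nonneg hlam hT),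
    mul_nonneg hK0 hD]

end IsSymmStepDistribution

section Kernel

variable {d : ℕ} {α : ℝ}

lemma znorm_eq_norm (z : Fin d → ℤ) :
    znorm d z = ‖(WithLp.toLp 2 fun i => (z i : ℝ) : EuclideanSpace ℝ (Fin d))‖ := by
  simp [znorm, EuclideanSpace.norm_eq]

lemma znorm_sub_le (y x : Fin d → ℤ) : znorm d (y - x) ≤ znorm d y + znorm d x := by
  have h : (WithLp.toLp 2 fun i => ((y - x) i : ℝ) : EuclideanSpace ℝ (Fin d)) =
      WithLp.toLp 2 (fun i => (y i : ℝ)) - WithLp.toLp 2 (fun i => (x i : ℝ)) := by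
    ext i
    simp
  simpa only [znorm_eq_norm, h] using norm_sub_le _ _

lemma znorm_neg (z : Fin d → ℤ) : znorm d (-z) = znorm d z := by
  simp [znorm]

lemma one_le_znorm {z : Fin d → ℤ} (hz : z ≠ 0) : 1 ≤ znorm d z := by
  obtain ⟨i, hi⟩ := Function.ne_iff.mp hz
  have h1 : (1 : ℝ) ≤ (z i : ℝ) ^ 2 := by
    have : (1 : ℤ) ≤ z i ^ 2 := by nlinarith [Int.one_le_abs hi, sq_abs (z i)]
    exact_mod_cast this
  rw [znorm, Real.one_le_sqrt]
  exact h1.trans (Finset.single_le_sum (fun j _ => sq_nonneg ((z j : ℝ))) (Finset.mem_univ i))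

open Module in
lemma summable_znorm_rpow {r : ℝ} (hr : r < -d) :
    Summable fun z : Fin d → ℤ => znorm d z ^ r := by
  let b := (EuclideanSpace.basisFun (Fin d) ℝ).toBasis
  let L := Submodule.span ℤ (Set.range b)
  have hrank : finrank ℤ L = d := by rw [ZLattice.rank ℝ L]; simp
  have hL := ZLattice.summable_norm_rpow L r (by rwa [hrank])
  rw [← (b.restrictScalars ℤ).equivFun.symm.toEquiv.summable_iff] at hL
  refine hL.congr fun z => ?_
  have hcoe : ((b.restrictScalars ℤ).equivFun.symm z : EuclideanSpace ℝ (Fin d)) =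
      WithLp.toLp 2 fun i => (z i : ℝ) := by
    rw [Basis.equivFun_symm_apply, Submodule.coe_sum]
    ext i
    simp only [SetLike.val_smul, Basis.restrictScalars_apply]
    simp [b, Pi.single_apply]
  simp [znorm_eq_norm, ← hcoe]

-- `0 ^ r = 0` for `r ≠ 0`, so the case split in `sstar` and `sfun` is only cosmetic
lemma ite_zero_znorm_rpow {r : ℝ} (hr : r ≠ 0) (x : Fin d → ℤ) :
    (if x = 0 then 0 else znorm d x ^ r) = znorm d x ^ r := by
  split_ifs with hx
  · simp [hx, znorm, Real.zero_rpow hr]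
  · rfl

lemma sstar_eq (hα : 0 < α) : sstar d α = ∑' x, znorm d x ^ (-((d : ℝ) + α)) :=
  tsum_congr (ite_zero_znorm_rpow (neg_ne_zero.2 (by positivity)))

lemma sfun_eq (hα : 0 < α) (x : Fin d → ℤ) :
    sfun d α x = znorm d x ^ (-((d : ℝ) + α)) / sstar d α := by
  conv_rhs => rw [← ite_zero_znorm_rpow (neg_ne_zero.2 (by positivity)) x]
  rw [sfun, ite_div, zero_div]

lemma sstar_pos (hd : 1 ≤ d) (hα : 0 < α) : 0 < sstar d α := by
  have : Nonempty (Fin d) := ⟨⟨0, hd⟩⟩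
  obtain ⟨x, hx⟩ := exists_ne (0 : Fin d → ℤ)
  rw [sstar_eq hα]
  exact (summable_znorm_rpow (by linarith)).tsum_pos
    (fun _ => Real.rpow_nonneg (Real.sqrt_nonneg _) _) x
    (Real.rpow_pos_of_pos (zero_lt_one.trans_le (one_le_znorm hx)) _)

lemma isSymmStepDistribution_sfun (hd : 1 ≤ d) (hα : 0 < α) :
    IsSymmStepDistribution (sfun d α) where
  nonneg x := by
    rw [sfun_eq hα]
    exact div_nonneg (Real.rpow_nonneg (Real.sqrt_nonneg _) _) (sstar_pos hd hα).le
  summable :=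
    ((summable_znorm_rpow (by linarith)).div_const _).congr fun x => (sfun_eq hα x).symm
  tsum_eq_one := by
    simp_rw [sfun_eq hα]
    rw [tsum_div_const, ← sstar_eq hα, div_self (sstar_pos hd hα).ne']
  map_zero := by simp [sfun]
  map_neg x := by simp [sfun, znorm_neg]

lemma sfun_mul_sfun_le (hd : 1 ≤ d) (hα : 0 < α) {x y : Fin d → ℤ} (hx : x ≠ 0) (hy : y ≠ 0)
    (hxy : x ≠ y) :
    sfun d α x * sfun d α y ≤ 2 ^ ((d : ℝ) + α) / sstar d α * sfun d α (y - x) := by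
  have key := rpow_neg_mul_rpow_neg_le (one_le_znorm hx) (one_le_znorm hy)
    (zero_lt_one.trans_le (one_le_znorm (sub_ne_zero.2 hxy.symm)))
    ((znorm_sub_le y x).trans_eq (add_comm _ _)) (by positivity : (0 : ℝ) ≤ d + α)
  simp only [sfun_eq hα, div_mul_div_comm]
  exact div_le_div_of_nonneg_right key (mul_self_nonneg _)

end Kernel

/-- the quadratic forms `Q(f)` (on `ℤ^d \ {0}`) and `Q_ext(f_ext)` (on `ℤ^d`,
where `f_ext` extends `f` by `f_ext(0) = Σ_{x≠0} s(x) f(x)`) are comparable: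
`Q(f) ≤ Q_ext(f_ext) ≤ C·Q(f)` with `C = C(d,α)` independent of `λ > 0` and `f`. -/
theorem statement18 (d : ℕ) (hd : 1 ≤ d) (α : ℝ) (hα : 0 < α) :
    ∃ C : ℝ, ∀ lam : ℝ, 0 < lam →
      ∀ f : (Fin d → ℤ) → ℝ, (Function.support f).Finite →
      ∀ g : (Fin d → ℤ) → ℝ,
        (∀ x : Fin d → ℤ, x ≠ 0 → g x = f x) →
        (g 0 = ∑' x : Fin d → ℤ, sfun d α x * f x) →
        (lam * (∑' x : Fin d → ℤ, (if x ≠ 0 then f x ^ 2 else 0))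
            + (1 / 4) * ∑' x : Fin d → ℤ, ∑' y : Fin d → ℤ,
                (if x ≠ 0 ∧ y ≠ 0 then sfun d α (y - x) * (f y - f x) ^ 2 else 0))
          ≤ (lam * (∑' x : Fin d → ℤ, g x ^ 2)
            + (1 / 4) * ∑' x : Fin d → ℤ, ∑' y : Fin d → ℤ,
                sfun d α (y - x) * (g y - g x) ^ 2) ∧
        (lam * (∑' x : Fin d → ℤ, g x ^ 2)
            + (1 / 4) * ∑' x : Fin d → ℤ, ∑' y : Fin d → ℤ,
                sfun d α (y - x) * (g y - g x) ^ 2)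
          ≤ C * (lam * (∑' x : Fin d → ℤ, (if x ≠ 0 then f x ^ 2 else 0))
            + (1 / 4) * ∑' x : Fin d → ℤ, ∑' y : Fin d → ℤ,
                (if x ≠ 0 ∧ y ≠ 0 then sfun d α (y - x) * (f y - f x) ^ 2 else 0)) := by
  have hs := isSymmStepDistribution_sfun hd hα
  have hK0 : 0 ≤ 2 ^ ((d : ℝ) + α) / sstar d α :=
    div_nonneg (Real.rpow_nonneg zero_le_two _) (sstar_pos hd hα).le
  refine ⟨2 + 2 * (2 ^ ((d : ℝ) + α) / sstar d α), fun lam hlam f hf g hgf hg0 => ?_⟩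
  have hg : Summable fun x => g x ^ 2 := by
    refine summable_of_hasFiniteSupport ((hf.insert 0).subset fun x hx => ?_)
    by_cases hx0 : x = 0
    · exact .inl hx0
    · exact .inr (by simpa [hgf x hx0] using hx)
  exact ⟨hs.puncturedDirichletForm_le_dirichletForm hlam.le hg hgf,
    hs.dirichletForm_le_mul_puncturedDirichletForm hK0
      (fun x y => sfun_mul_sfun_le hd hα) hlam.le hg hgf hg0⟩
end
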